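/- Periodic best-mate initiatives converge in at most B/2 rounds: in an acyclic b-matching preference instance, call a round any finite sequence of best-mate initiatives in which every peer of P takes exactly one best-mate initiative, the order of peers within each round being arbitrary and possibly different from round to round. Then starting from any configuration, the configuration obtained after ⌈B/2⌉ rounds is the unique stable configuration of the instance, where B = Σ_{p∈P} b(p) is the sum of all quotas. -/

import Mathlib

/-!
A formalization of b-matching preference instances (peers, acceptance graph,
quotas, preference lists given by ranks), configurations, blocking pairs,
stability, active initiatives, loving pairs, and acyclicity.
-/

open Finset

/-- A b-matching preference instance on a finite set `P` of peers:
an acceptance graph `G`, quotas `b`, and for each peer `p` a rank function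
(`rank p q` is the position of `q` in `p`'s preference list, smaller is better),
injective on the neighbors of `p` (strict preferences). -/
structure PrefInstance (P : Type*) [Fintype P] [DecidableEq P] where
  G : SimpleGraph P
  b : P → ℕ
  rank : P → P → ℕ
  rank_injOn : ∀ p : P, Set.InjOn (rank p) {q | G.Adj p q}

namespace PrefInstance

variable {P : Type*} [Fintype P] [DecidableEq P] (I : PrefInstance P)

/-- `p` prefers `q` to `r` (both neighbors of `p`, `q` ranked better). -/
def Prefers (p q r : P) : Prop :=
  I.G.Adj p q ∧ I.G.Adj p r ∧ I.rank p q < I.rank p r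

/-- The instance is acyclic: there is no preference cycle, i.e. no `k ≥ 3`
distinct peers `p_1, …, p_k` (indices modulo `k`) such that each `p_i`
prefers `p_{i+1}` to `p_{i-1}`. -/
def Acyclic : Prop :=
  ¬ ∃ (k : ℕ) (f : ZMod k → P), 3 ≤ k ∧ Function.Injective f ∧
      ∀ i : ZMod k, I.Prefers (f i) (f (i + 1)) (f (i - 1))

/-- The mates of `p` in a set `C` of edges. -/
def mates (C : Finset (Sym2 P)) (p : P) : Finset P :=
  Finset.univ.filter fun q => s(p, q) ∈ C

/-- `C` is a configuration: a set of edges of the acceptance graph in which every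
peer `p` has at most `b p` mates. -/
def IsConfig (C : Finset (Sym2 P)) : Prop :=
  (∀ e ∈ C, e ∈ I.G.edgeSet) ∧ ∀ p : P, (mates C p).card ≤ I.b p

/-- `p` is under-mated in `C`: it has fewer than `b p` mates. -/
def UnderMated (C : Finset (Sym2 P)) (p : P) : Prop :=
  (mates C p).card < I.b p

/-- `p` is willing to pair with `q`: it is under-mated, or it prefers `q`
to its worst mate in `C`. -/
def Willing (C : Finset (Sym2 P)) (p q : P) : Prop :=
  I.UnderMated C p ∨ ∃ w ∈ mates C p, I.rank p q < I.rank p w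

/-- `{p, q}` is a blocking pair for `C`: an edge of the acceptance graph not in
`C` such that each endpoint is under-mated or prefers the other to its worst mate. -/
def BlockingPair (C : Finset (Sym2 P)) (p q : P) : Prop :=
  I.G.Adj p q ∧ s(p, q) ∉ C ∧ I.Willing C p q ∧ I.Willing C q p

/-- A configuration is stable if it admits no blocking pair. -/
def IsStable (C : Finset (Sym2 P)) : Prop :=
  I.IsConfig C ∧ ∀ p q : P, ¬ I.BlockingPair C p q

/-- The edges to be dropped at `p` when `p` gets a new mate: none if `p` is
under-mated, otherwise the edge joining `p` to its worst mate in `C`. -/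
def dropEdges (C : Finset (Sym2 P)) (p : P) : Finset (Sym2 P) :=
  if (mates C p).card < I.b p then ∅
  else ((mates C p).filter fun w => ∀ r ∈ mates C p, I.rank p r ≤ I.rank p w).image
      fun w => s(p, w)

/-- The configuration produced by resolving the blocking pair `{p, q}` of `C`:
add the edge `{p, q}` and, for each of `p` and `q` already at full quota,
remove the edge joining it to its worst mate. -/
def resolve (C : Finset (Sym2 P)) (p q : P) : Finset (Sym2 P) :=
  insert s(p, q) (C \ (I.dropEdges C p ∪ I.dropEdges C q))

/-- `C'` is obtained from `C` by an active initiative. -/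
def ActiveStep (C C' : Finset (Sym2 P)) : Prop :=
  ∃ p q : P, I.BlockingPair C p q ∧ C' = I.resolve C p q

/-- `{p, q}` is a loving pair: an edge of the acceptance graph whose endpoints
rank each other first. -/
def LovingPair (p q : P) : Prop :=
  I.G.Adj p q ∧ (∀ r : P, I.G.Adj p r → I.rank p q ≤ I.rank p r) ∧
    ∀ r : P, I.G.Adj q r → I.rank q p ≤ I.rank q r

open scoped Classical in
/-- The best-mate initiative of peer `p` at configuration `C`: resolve the
blocking pair `{p, q}` where `q` is the peer `p` prefers most among all peers
forming a blocking pair with `p`; if `p` belongs to no blocking pair, `C` is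
left unchanged. -/
noncomputable def bestMateInit (C : Finset (Sym2 P)) (p : P) : Finset (Sym2 P) :=
  if h : ∃ q : P, I.BlockingPair C p q ∧
      ∀ r : P, I.BlockingPair C p r → I.rank p q ≤ I.rank p r then
    I.resolve C p h.choose
  else C

end PrefInstance

variable {P : Type*} [Fintype P] [DecidableEq P]

open PrefInstance

/-!
Call a peer active when its quota is positive. In an acyclic instance, repeatedly passing from
an active peer to its favourite active neighbour must end in a 2-cycle, since a longer cycle is a
preference cycle; so there is a loving pair `{p, q}` among active peers. In every round the
best-mate initiative of `p` creates the edge `{p, q}` if it is missing, and once present it is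
never removed: it is never the worst edge at `p` or at `q`. Along configurations containing
`{p, q}`, best-mate dynamics coincides with the dynamics of the instance in which that edge is
deleted and both quotas are lowered by one; this instance is acyclic and its total quota is
`B - 2`. Induction on `B` gives convergence, and the same reduction gives uniqueness.
-/

theorem Function.exists_iterate_mem_periodicPts {α : Type*} [Finite α] (f : α → α) (x : α) :
    ∃ n, f^[n] x ∈ Function.periodicPts f := by
  obtain ⟨m, n, hmn, h⟩ := Finite.exists_ne_map_eq_of_infinite fun n => f^[n] x
  wlog hlt : m < n generalizing m n
  · exact this n m hmn.symm h.symm (by omega)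
  refine ⟨m, Function.mk_mem_periodicPts (n := n - m) (by omega) ?_⟩
  change f^[n - m] (f^[m] x) = f^[m] x
  rw [← Function.iterate_add_apply, Nat.sub_add_cancel hlt.le]
  exact h.symm

theorem List.foldl_hom_of_invariant {α β γ : Type*} (S : α → Prop) (f : α → γ)
    {g₁ : α → β → α} {g₂ : γ → β → γ} (hS : ∀ a b, S a → S (g₁ a b))
    (hf : ∀ a b, S a → g₂ (f a) b = f (g₁ a b)) (l : List β) {a : α} (ha : S a) :
    S (l.foldl g₁ a) ∧ l.foldl g₂ (f a) = f (l.foldl g₁ a) := by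
  induction l generalizing a with
  | nil => exact ⟨ha, rfl⟩
  | cons b l ih => simpa only [List.foldl_cons, hf a b ha] using ih (hS a b ha)

namespace PrefInstance

variable {I : PrefInstance P} {C : Finset (Sym2 P)} {p q t x y : P}

@[simp]
theorem mem_mates : q ∈ mates C p ↔ s(p, q) ∈ C := by
  simp [mates]

theorem mem_mates_comm : q ∈ mates C p ↔ p ∈ mates C q := by
  rw [mem_mates, mem_mates, Sym2.eq_swap]

theorem IsConfig.adj_of_mem_mates (hC : I.IsConfig C) (h : q ∈ mates C p) : I.G.Adj p q :=
  hC.1 _ (mem_mates.1 h)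

theorem IsConfig.b_pos_of_mem_mates (hC : I.IsConfig C) (h : q ∈ mates C p) : 0 < I.b p :=
  (Finset.card_pos.2 ⟨q, h⟩).trans_le (hC.2 p)

theorem Willing.b_pos (hC : I.IsConfig C) (h : I.Willing C p q) : 0 < I.b p := by
  rcases h with h | ⟨w, hw, -⟩
  · exact (Nat.zero_le _).trans_lt h
  · exact hC.b_pos_of_mem_mates hw

theorem IsConfig.isStable_of_not_exists (hC : I.IsConfig C)
    (h : ¬ ∃ x y, I.G.Adj x y ∧ 0 < I.b x ∧ 0 < I.b y) : I.IsStable C :=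
  ⟨hC, fun x y hxy => h ⟨x, y, hxy.1, hxy.2.2.1.b_pos hC, hxy.2.2.2.b_pos hC⟩⟩

theorem IsConfig.eq_empty_of_not_exists (hC : I.IsConfig C)
    (h : ¬ ∃ x y, I.G.Adj x y ∧ 0 < I.b x ∧ 0 < I.b y) : C = ∅ := by
  rw [Finset.eq_empty_iff_forall_notMem]
  rintro ⟨x, y⟩ he
  have hxy : y ∈ mates C x := mem_mates.2 he
  exact h ⟨x, y, hC.adj_of_mem_mates hxy, hC.b_pos_of_mem_mates hxy,
    hC.b_pos_of_mem_mates (mem_mates_comm.1 hxy)⟩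

theorem mem_dropEdges {e : Sym2 P} :
    e ∈ I.dropEdges C p ↔ ¬ (mates C p).card < I.b p ∧
      ∃ w ∈ mates C p, (∀ r ∈ mates C p, I.rank p r ≤ I.rank p w) ∧ e = s(p, w) := by
  unfold dropEdges
  split_ifs with h <;> simp [h, eq_comm, and_assoc]

theorem dropEdges_subset : I.dropEdges C p ⊆ C := by
  intro e he
  obtain ⟨-, w, hw, -, rfl⟩ := mem_dropEdges.1 he
  exact mem_mates.1 hw

theorem mem_resolve {e : Sym2 P} :
    e ∈ I.resolve C p q ↔
      e = s(p, q) ∨ (e ∈ C ∧ e ∉ I.dropEdges C p ∧ e ∉ I.dropEdges C q) := by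
  simp [resolve]

theorem resolve_comm : I.resolve C p q = I.resolve C q p := by
  rw [resolve, resolve, Sym2.eq_swap, Finset.union_comm]

theorem mates_resolve_subset : mates (I.resolve C x y) x ⊆
    insert y ((mates C x).filter fun u => s(x, u) ∉ I.dropEdges C x) := by
  intro u hu
  rcases mem_resolve.1 (mem_mates.1 hu) with h | ⟨h, hx, -⟩
  · rw [Sym2.congr_right] at h
    exact Finset.mem_insert.2 (Or.inl h)
  · exact Finset.mem_insert_of_mem (Finset.mem_filter.2 ⟨mem_mates.2 h, hx⟩)

theorem IsConfig.card_mates_resolve_le (hC : I.IsConfig C) (hw : I.Willing C x y) :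
    (mates (I.resolve C x y) x).card ≤ I.b x := by
  set kept := (mates C x).filter fun u => s(x, u) ∉ I.dropEdges C x
  have hle : (mates (I.resolve C x y) x).card ≤ kept.card + 1 :=
    (Finset.card_le_card mates_resolve_subset).trans (Finset.card_insert_le _ _)
  by_cases hu : (mates C x).card < I.b x
  · have : kept.card ≤ (mates C x).card := Finset.card_filter_le _ _
    omega
  · obtain ⟨w', hw', -⟩ := hw.resolve_left hu
    obtain ⟨w, hw, hworst⟩ := Finset.exists_max_image (mates C x) (I.rank x) ⟨w', hw'⟩
    have hdrop : s(x, w) ∈ I.dropEdges C x := mem_dropEdges.2 ⟨hu, w, hw, hworst, rfl⟩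
    have hsub : kept ⊆ (mates C x).erase w := fun u hu => Finset.mem_erase.2
      ⟨fun h => (Finset.mem_filter.1 hu).2 (h ▸ hdrop), (Finset.mem_filter.1 hu).1⟩
    have := Finset.card_le_card hsub
    have := Finset.card_erase_add_one hw
    have := hC.2 x
    omega

theorem IsConfig.resolve (hC : I.IsConfig C) (h : I.BlockingPair C x y) :
    I.IsConfig (I.resolve C x y) := by
  refine ⟨fun e he => ?_, fun z => ?_⟩
  · rcases mem_resolve.1 he with rfl | ⟨he, -⟩
    exacts [h.1, hC.1 e he]
  · by_cases hzx : z = x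
    · subst hzx
      exact hC.card_mates_resolve_le h.2.2.1
    by_cases hzy : z = y
    · subst hzy
      rw [resolve_comm]
      exact hC.card_mates_resolve_le h.2.2.2
    refine le_trans (Finset.card_le_card fun u hu => ?_) (hC.2 z)
    rcases mem_resolve.1 (mem_mates.1 hu) with h | ⟨h, -⟩
    · rcases Sym2.eq_iff.1 h with ⟨rfl, -⟩ | ⟨rfl, -⟩ <;> contradiction
    · exact mem_mates.2 h

theorem bestMateInit_eq_resolve (h : I.BlockingPair C p q)
    (hbest : ∀ u, I.BlockingPair C p u → I.rank p q ≤ I.rank p u) :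
    I.bestMateInit C p = I.resolve C p q := by
  have hex : ∃ q, I.BlockingPair C p q ∧
      ∀ u, I.BlockingPair C p u → I.rank p q ≤ I.rank p u := ⟨q, h, hbest⟩
  rw [bestMateInit, dif_pos hex]
  obtain ⟨h', hbest'⟩ := hex.choose_spec
  rw [I.rank_injOn p h'.1 h.1 ((hbest' q h).antisymm (hbest _ h'))]

theorem bestMateInit_eq_self (h : ∀ u, ¬ I.BlockingPair C p u) : I.bestMateInit C p = C := by
  rw [bestMateInit, dif_neg]
  rintro ⟨u, hu, -⟩
  exact h u hu

theorem bestMateInit_eq_self_or_resolve (C : Finset (Sym2 P)) (p : P) :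
    I.bestMateInit C p = C ∨
      ∃ q, I.BlockingPair C p q ∧ I.bestMateInit C p = I.resolve C p q := by
  unfold bestMateInit
  split
  · next h => exact Or.inr ⟨_, h.choose_spec.1, rfl⟩
  · exact Or.inl rfl

theorem IsConfig.bestMateInit (hC : I.IsConfig C) (p : P) : I.IsConfig (I.bestMateInit C p) := by
  rcases bestMateInit_eq_self_or_resolve C p with h | ⟨q, hq, h⟩ <;> rw [h]
  exacts [hC, hC.resolve hq]

theorem IsConfig.foldl_bestMateInit (hC : I.IsConfig C) (l : List P) :
    I.IsConfig (l.foldl I.bestMateInit C) := by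
  induction l generalizing C with
  | nil => exact hC
  | cons r l ih => exact ih (hC.bestMateInit r)

theorem IsStable.foldl_bestMateInit (hC : I.IsStable C) (l : List P) :
    l.foldl I.bestMateInit C = C :=
  List.foldl_fixed' (fun r => bestMateInit_eq_self (hC.2 r)) l

def RanksFirst (I : PrefInstance P) (x t : P) : Prop :=
  ∀ r, I.G.Adj x r → 0 < I.b r → I.rank x t ≤ I.rank x r

/-- Peers of quota zero take part in no configuration, and `reduce` creates such peers, so loving
pairs are taken among peers of positive quota. -/
def PosLovingPair (I : PrefInstance P) (p q : P) : Prop :=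
  I.G.Adj p q ∧ 0 < I.b p ∧ 0 < I.b q ∧ I.RanksFirst p q ∧ I.RanksFirst q p

theorem Acyclic.minimalPeriod_le_two (hI : I.Acyclic) {f : P → P} {z : P}
    (hf : ∀ n, f^[n + 2] z ≠ f^[n] z → I.Prefers (f^[n + 1] z) (f^[n + 2] z) (f^[n] z)) :
    Function.minimalPeriod f z ≤ 2 := by
  set k := Function.minimalPeriod f z
  by_contra! hk
  have : NeZero k := ⟨by omega⟩
  have hval : ∀ (i : ZMod k) (m : ℕ), f^[(i + m).val] z = f^[i.val + m] z := by
    intro i m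
    rw [ZMod.val_add, ZMod.val_natCast, Nat.add_mod_mod, Function.iterate_mod_minimalPeriod_eq]
  have hinj : Function.Injective fun i : ZMod k => f^[i.val] z := fun i j hij =>
    ZMod.val_injective k
      (Function.iterate_injOn_Iio_minimalPeriod (ZMod.val_lt i) (ZMod.val_lt j) hij)
  -- the orbit of `z`, indexed by `ZMod k`, is a preference cycle
  refine hI ⟨k, fun i => f^[i.val] z, hk, hinj, fun i => ?_⟩
  have h1 := hval (i - 1) 1
  have h2 := hval (i - 1) 2
  rw [Nat.cast_one, sub_add_cancel] at h1
  rw [Nat.cast_ofNat, show i - 1 + 2 = i + 1 by ring] at h2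
  change I.Prefers (f^[i.val] z) (f^[(i + 1).val] z) (f^[(i - 1).val] z)
  rw [h1, h2]
  refine hf _ fun h => ?_
  have h2k : ((2 : ℕ) : ZMod k) = 0 := by
    have := hinj (h2.trans h)
    push_cast
    linear_combination this
  have := Nat.le_of_dvd two_pos ((ZMod.natCast_eq_zero_iff 2 k).1 h2k)
  omega

theorem Acyclic.exists_posLovingPair (hI : I.Acyclic) (hxy : I.G.Adj x y) (hx : 0 < I.b x)
    (hy : 0 < I.b y) : ∃ p q, I.PosLovingPair p q := by
  set S : Set P := {v | 0 < I.b v ∧ ∃ r, I.G.Adj v r ∧ 0 < I.b r}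
  have hbest : ∀ v ∈ S, ∃ t, I.G.Adj v t ∧ 0 < I.b t ∧ I.RanksFirst v t := by
    rintro v ⟨-, hv⟩
    obtain ⟨t, ⟨hvt, ht⟩, hmin⟩ :=
      Set.exists_min_image {r | I.G.Adj v r ∧ 0 < I.b r} (I.rank v) (Set.toFinite _) hv
    exact ⟨t, hvt, ht, fun r hr hbr => hmin r ⟨hr, hbr⟩⟩
  choose! next hadj hpos hfirst using hbest
  have hmaps : Set.MapsTo next S S := fun v hv => ⟨hpos v hv, v, (hadj v hv).symm, hv.1⟩
  obtain ⟨m, hm⟩ := Function.exists_iterate_mem_periodicPts next x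
  set z := next^[m] x
  have hS : ∀ n, next^[n] z ∈ S := fun n =>
    hmaps.iterate n (hmaps.iterate m ⟨hx, y, hxy, hy⟩)
  have hprefers : ∀ v ∈ S, next (next v) ≠ v → I.Prefers (next v) (next (next v)) v := by
    intro v hv hne
    have hvS := hmaps hv
    refine ⟨hadj _ hvS, (hadj v hv).symm, (hfirst _ hvS v (hadj v hv).symm hv.1).lt_of_ne ?_⟩
    exact fun h => hne (I.rank_injOn _ (hadj _ hvS) (hadj v hv).symm h)
  have hperiod := hI.minimalPeriod_le_two fun n => by
    simpa only [Function.iterate_succ_apply'] using hprefers _ (hS n)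
  have hperiod_pos := Function.minimalPeriod_pos_of_mem_periodicPts hm
  have hz2 : next (next z) = z := by
    have hdvd : Function.minimalPeriod next z ∣ 2 := by
      interval_cases Function.minimalPeriod next z <;> norm_num
    exact Function.isPeriodicPt_iff_minimalPeriod_dvd.2 hdvd
  have hz : z ∈ S := hS 0
  have hfirst' := hfirst _ (hmaps hz)
  rw [hz2] at hfirst'
  exact ⟨z, next z, hadj z hz, hz.1, (hmaps hz).1, hfirst z hz, hfirst'⟩

def reduce (I : PrefInstance P) (p q : P) : PrefInstance P where
  G := I.G.deleteEdges {s(p, q)}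
  b := Function.update (Function.update I.b p (I.b p - 1)) q (I.b q - 1)
  rank := I.rank
  rank_injOn v := (I.rank_injOn v).mono fun _ hr => hr.1

@[simp]
theorem reduce_adj : (I.reduce p q).G.Adj x y ↔ I.G.Adj x y ∧ s(x, y) ≠ s(p, q) := by
  simp [reduce]

theorem reduce_b_le : (I.reduce p q).b x ≤ I.b x := by
  simp only [reduce, Function.update_apply]
  split_ifs <;> subst_vars <;> omega

theorem sum_b_reduce (hpq : p ≠ q) (hp : 0 < I.b p) (hq : 0 < I.b q) :
    ∑ x, (I.reduce p q).b x + 2 = ∑ x, I.b x := by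
  have h : ∀ x,
      I.b x = (I.reduce p q).b x + (if x = p then 1 else 0) + (if x = q then 1 else 0) := by
    intro x
    simp only [reduce, Function.update_apply]
    split_ifs <;> subst_vars <;> first | omega | contradiction
  rw [Finset.sum_congr rfl fun x _ => h x, Finset.sum_add_distrib, Finset.sum_add_distrib,
    Finset.sum_ite_eq', Finset.sum_ite_eq']
  simp

theorem Acyclic.reduce (hI : I.Acyclic) (p q : P) : (I.reduce p q).Acyclic := by
  rintro ⟨k, f, hk, hinj, hcyc⟩
  exact hI ⟨k, f, hk, hinj, fun i =>
    ⟨(reduce_adj.1 (hcyc i).1).1, (reduce_adj.1 (hcyc i).2.1).1, (hcyc i).2.2⟩⟩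

theorem mates_erase_self : mates (C.erase s(p, q)) p = (mates C p).erase q := by
  ext r
  rw [mem_mates, Finset.mem_erase, Finset.mem_erase, mem_mates, Ne, Sym2.congr_right]

theorem mates_erase_of_ne (hp : x ≠ p) (hq : x ≠ q) :
    mates (C.erase s(p, q)) x = mates C x := by
  ext r
  simp [hp, hq]

theorem PosLovingPair.mates_erase_cases (hpq : I.PosLovingPair p q) (he : s(p, q) ∈ C) (x : P) :
    (mates (C.erase s(p, q)) x = mates C x ∧ (I.reduce p q).b x = I.b x) ∨
      ∃ t ∈ mates C x, I.RanksFirst x t ∧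
        mates (C.erase s(p, q)) x = (mates C x).erase t ∧ (I.reduce p q).b x = I.b x - 1 := by
  by_cases hxp : x = p
  · subst hxp
    exact Or.inr ⟨q, mem_mates.2 he, hpq.2.2.2.1, mates_erase_self, by simp [reduce, hpq.1.ne]⟩
  by_cases hxq : x = q
  · subst hxq
    refine Or.inr ⟨p, mem_mates_comm.1 (mem_mates.2 he), hpq.2.2.2.2, ?_, by simp [reduce]⟩
    rw [Sym2.eq_swap]
    exact mates_erase_self
  · exact Or.inl ⟨mates_erase_of_ne hxp hxq, by simp [reduce, hxp, hxq]⟩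

theorem willing_iff_erase_of_ranksFirst (hC : I.IsConfig C) (ht : t ∈ mates C x)
    (htop : I.RanksFirst x t) (hxy : I.G.Adj x y) (hy : 0 < I.b y) :
    I.Willing C x y ↔ ((mates C x).erase t).card < I.b x - 1 ∨
      ∃ w ∈ (mates C x).erase t, I.rank x y < I.rank x w := by
  have hcard := Finset.card_erase_add_one ht
  have hx := hC.b_pos_of_mem_mates ht
  refine or_congr (by unfold UnderMated; omega)
    ⟨fun ⟨w, hw, hlt⟩ => ⟨w, Finset.mem_erase.2 ⟨?_, hw⟩, hlt⟩,
      fun ⟨w, hw, hlt⟩ => ⟨w, Finset.mem_of_mem_erase hw, hlt⟩⟩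
  rintro rfl
  exact (htop y hxy hy).not_gt hlt

theorem mem_dropEdges_iff_erase_of_ranksFirst (hC : I.IsConfig C) (ht : t ∈ mates C x)
    (htop : I.RanksFirst x t) (hxy : I.G.Adj x y) (hy : 0 < I.b y) (hwill : I.Willing C x y)
    {e : Sym2 P} :
    e ∈ I.dropEdges C x ↔ ¬ ((mates C x).erase t).card < I.b x - 1 ∧
      ∃ w ∈ (mates C x).erase t,
        (∀ r ∈ (mates C x).erase t, I.rank x r ≤ I.rank x w) ∧ e = s(x, w) := by
  have hcard := Finset.card_erase_add_one ht
  have hx := hC.b_pos_of_mem_mates ht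
  rw [mem_dropEdges]
  constructor
  · rintro ⟨hfull, w, hw, hworst, rfl⟩
    -- `x` is full, so it prefers `y` to some mate, hence its worst mate is not its favourite `t`
    have hwt : w ≠ t := by
      rintro rfl
      obtain ⟨w', hw', hlt⟩ := hwill.resolve_left hfull
      exact (htop y hxy hy).not_gt (hlt.trans_le (hworst w' hw'))
    exact ⟨by omega, w, Finset.mem_erase.2 ⟨hwt, hw⟩,
      fun r hr => hworst r (Finset.mem_of_mem_erase hr), rfl⟩
  · rintro ⟨hfull, w, hw, hworst, rfl⟩
    have hw' := Finset.mem_of_mem_erase hw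
    refine ⟨by omega, w, hw', fun r hr => ?_, rfl⟩
    by_cases hrt : r = t
    · subst hrt
      exact htop w (hC.adj_of_mem_mates hw') (hC.b_pos_of_mem_mates (mem_mates_comm.1 hw'))
    · exact hworst r (Finset.mem_erase.2 ⟨hrt, hr⟩)

theorem PosLovingPair.isConfig_reduce (hpq : I.PosLovingPair p q) (hC : I.IsConfig C)
    (he : s(p, q) ∈ C) : (I.reduce p q).IsConfig (C.erase s(p, q)) := by
  refine ⟨fun f hf => ?_, fun x => ?_⟩
  · obtain ⟨hne, hf⟩ := Finset.mem_erase.1 hf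
    simp only [reduce, SimpleGraph.edgeSet_deleteEdges]
    exact ⟨hC.1 f hf, hne⟩
  · rcases hpq.mates_erase_cases he x with ⟨hm, hb⟩ | ⟨t, ht, -, hm, hb⟩
    · rw [hm, hb]
      exact hC.2 x
    · rw [hm, hb, Finset.card_erase_of_mem ht]
      exact Nat.sub_le_sub_right (hC.2 x) 1

theorem PosLovingPair.willing_iff_reduce (hpq : I.PosLovingPair p q) (hC : I.IsConfig C)
    (he : s(p, q) ∈ C) (hxy : I.G.Adj x y) (hy : 0 < I.b y) :
    I.Willing C x y ↔ (I.reduce p q).Willing (C.erase s(p, q)) x y := by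
  rcases hpq.mates_erase_cases he x with ⟨hm, hb⟩ | ⟨t, ht, htop, hm, hb⟩
  · simp only [Willing, UnderMated, hm, hb]
    rfl
  · rw [willing_iff_erase_of_ranksFirst hC ht htop hxy hy]
    simp only [Willing, UnderMated, hm, hb]
    rfl

theorem PosLovingPair.dropEdges_reduce (hpq : I.PosLovingPair p q) (hC : I.IsConfig C)
    (he : s(p, q) ∈ C) (hxy : I.G.Adj x y) (hy : 0 < I.b y) (hwill : I.Willing C x y) :
    (I.reduce p q).dropEdges (C.erase s(p, q)) x = I.dropEdges C x := by
  ext e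
  rcases hpq.mates_erase_cases he x with ⟨hm, hb⟩ | ⟨t, ht, htop, hm, hb⟩
  · rw [mem_dropEdges, mem_dropEdges, hm, hb]
    rfl
  · rw [mem_dropEdges, mem_dropEdges_iff_erase_of_ranksFirst hC ht htop hxy hy hwill, hm, hb]
    rfl

theorem PosLovingPair.notMem_dropEdges (hpq : I.PosLovingPair p q) (hC : I.IsConfig C)
    (he : s(p, q) ∈ C) (hxy : I.G.Adj x y) (hy : 0 < I.b y) (hwill : I.Willing C x y) :
    s(p, q) ∉ I.dropEdges C x := by
  rw [← hpq.dropEdges_reduce hC he hxy hy hwill]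
  exact fun h => Finset.notMem_erase _ _ (dropEdges_subset h)

theorem PosLovingPair.blockingPair_iff_reduce (hpq : I.PosLovingPair p q) (hC : I.IsConfig C)
    (he : s(p, q) ∈ C) :
    I.BlockingPair C x y ↔ (I.reduce p q).BlockingPair (C.erase s(p, q)) x y := by
  constructor
  · rintro ⟨hxy, hnot, hwx, hwy⟩
    have hne : s(x, y) ≠ s(p, q) := fun h => hnot (h ▸ he)
    exact ⟨reduce_adj.2 ⟨hxy, hne⟩, fun h => hnot (Finset.mem_of_mem_erase h),
      (hpq.willing_iff_reduce hC he hxy (hwy.b_pos hC)).1 hwx,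
      (hpq.willing_iff_reduce hC he hxy.symm (hwx.b_pos hC)).1 hwy⟩
  · rintro ⟨hxy, hnot, hwx, hwy⟩
    obtain ⟨hxy, hne⟩ := reduce_adj.1 hxy
    have hC' := hpq.isConfig_reduce hC he
    exact ⟨hxy, fun h => hnot (Finset.mem_erase.2 ⟨hne, h⟩),
      (hpq.willing_iff_reduce hC he hxy ((hwy.b_pos hC').trans_le reduce_b_le)).2 hwx,
      (hpq.willing_iff_reduce hC he hxy.symm ((hwx.b_pos hC').trans_le reduce_b_le)).2 hwy⟩

theorem PosLovingPair.isStable_iff_reduce (hpq : I.PosLovingPair p q) (hC : I.IsConfig C)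
    (he : s(p, q) ∈ C) : I.IsStable C ↔ (I.reduce p q).IsStable (C.erase s(p, q)) := by
  simp only [IsStable, hC, hpq.isConfig_reduce hC he, hpq.blockingPair_iff_reduce hC he]

theorem PosLovingPair.resolve_reduce (hpq : I.PosLovingPair p q) (hC : I.IsConfig C)
    (he : s(p, q) ∈ C) (hxy : I.BlockingPair C x y) :
    s(p, q) ∈ I.resolve C x y ∧
      (I.reduce p q).resolve (C.erase s(p, q)) x y = (I.resolve C x y).erase s(p, q) := by
  obtain ⟨hadj, hnot, hwx, hwy⟩ := hxy
  have hne : s(x, y) ≠ s(p, q) := fun h => hnot (h ▸ he)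
  refine ⟨mem_resolve.2 (Or.inr ⟨he, hpq.notMem_dropEdges hC he hadj (hwy.b_pos hC) hwx,
    hpq.notMem_dropEdges hC he hadj.symm (hwx.b_pos hC) hwy⟩), ?_⟩
  rw [resolve, resolve, hpq.dropEdges_reduce hC he hadj (hwy.b_pos hC) hwx,
    hpq.dropEdges_reduce hC he hadj.symm (hwx.b_pos hC) hwy, Finset.erase_insert_of_ne hne,
    Finset.erase_sdiff_comm]

theorem PosLovingPair.bestMateInit_reduce (hpq : I.PosLovingPair p q) (hC : I.IsConfig C)
    (he : s(p, q) ∈ C) (r : P) :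
    s(p, q) ∈ I.bestMateInit C r ∧
      (I.reduce p q).bestMateInit (C.erase s(p, q)) r = (I.bestMateInit C r).erase s(p, q) := by
  by_cases hex : ∃ u, I.BlockingPair C r u
  · obtain ⟨c, hc, hbest⟩ := Set.exists_min_image _ (I.rank r) (Set.toFinite _) hex
    rw [bestMateInit_eq_resolve hc hbest, bestMateInit_eq_resolve
      ((hpq.blockingPair_iff_reduce hC he).1 hc)
      fun u hu => hbest u ((hpq.blockingPair_iff_reduce hC he).2 hu)]
    exact hpq.resolve_reduce hC he hc
  · rw [bestMateInit_eq_self (not_exists.1 hex),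
      bestMateInit_eq_self fun u hu => hex ⟨u, (hpq.blockingPair_iff_reduce hC he).2 hu⟩]
    exact ⟨he, rfl⟩

theorem PosLovingPair.foldl_bestMateInit_reduce (hpq : I.PosLovingPair p q) (hC : I.IsConfig C)
    (he : s(p, q) ∈ C) (l : List P) :
    (I.IsConfig (l.foldl I.bestMateInit C) ∧ s(p, q) ∈ l.foldl I.bestMateInit C) ∧
      l.foldl (I.reduce p q).bestMateInit (C.erase s(p, q)) =
        (l.foldl I.bestMateInit C).erase s(p, q) :=
  List.foldl_hom_of_invariant (fun D => I.IsConfig D ∧ s(p, q) ∈ D) (fun D => D.erase s(p, q))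
    (fun _ r hD => ⟨hD.1.bestMateInit r, (hpq.bestMateInit_reduce hD.1 hD.2 r).1⟩)
    (fun _ r hD => (hpq.bestMateInit_reduce hD.1 hD.2 r).2) l ⟨hC, he⟩

theorem PosLovingPair.foldl_rounds_reduce (hpq : I.PosLovingPair p q) (hC : I.IsConfig C)
    (he : s(p, q) ∈ C) (rounds : List (List P)) :
    (I.IsConfig (rounds.foldl (fun D l => l.foldl I.bestMateInit D) C) ∧
        s(p, q) ∈ rounds.foldl (fun D l => l.foldl I.bestMateInit D) C) ∧
      rounds.foldl (fun D l => l.foldl (I.reduce p q).bestMateInit D) (C.erase s(p, q)) =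
        (rounds.foldl (fun D l => l.foldl I.bestMateInit D) C).erase s(p, q) :=
  List.foldl_hom_of_invariant (fun D => I.IsConfig D ∧ s(p, q) ∈ D) (fun D => D.erase s(p, q))
    (fun _ l hD => (hpq.foldl_bestMateInit_reduce hD.1 hD.2 l).1)
    (fun _ l hD => (hpq.foldl_bestMateInit_reduce hD.1 hD.2 l).2) rounds ⟨hC, he⟩

theorem willing_of_ranksFirst (hC : I.IsConfig C) (hx : 0 < I.b x) (hxt : I.G.Adj x t)
    (htop : I.RanksFirst x t) (ht : t ∉ mates C x) : I.Willing C x t := by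
  by_cases hu : (mates C x).card < I.b x
  · exact Or.inl hu
  obtain ⟨w, hw⟩ := Finset.card_pos.1 (by omega : 0 < (mates C x).card)
  have hxw := hC.adj_of_mem_mates hw
  refine Or.inr ⟨w, hw, (htop w hxw (hC.b_pos_of_mem_mates (mem_mates_comm.1 hw))).lt_of_ne ?_⟩
  exact fun h => ht (I.rank_injOn x hxt hxw h ▸ hw)

theorem PosLovingPair.blockingPair (hpq : I.PosLovingPair p q) (hC : I.IsConfig C)
    (he : s(p, q) ∉ C) : I.BlockingPair C p q :=
  ⟨hpq.1, he, willing_of_ranksFirst hC hpq.2.1 hpq.1 hpq.2.2.2.1 (mt mem_mates.1 he),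
    willing_of_ranksFirst hC hpq.2.2.1 hpq.1.symm hpq.2.2.2.2
      (mt mem_mates.1 (by rwa [Sym2.eq_swap]))⟩

theorem PosLovingPair.mem_of_isStable (hpq : I.PosLovingPair p q) (hC : I.IsStable C) :
    s(p, q) ∈ C := by
  by_contra he
  exact hC.2 p q (hpq.blockingPair hC.1 he)

theorem PosLovingPair.mem_bestMateInit_left (hpq : I.PosLovingPair p q) (hC : I.IsConfig C) :
    s(p, q) ∈ I.bestMateInit C p := by
  by_cases he : s(p, q) ∈ C
  · exact (hpq.bestMateInit_reduce hC he p).1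
  -- every blocking partner of `p` is willing, hence of positive quota, so `q` is the best one
  rw [bestMateInit_eq_resolve (hpq.blockingPair hC he)
    fun u hu => hpq.2.2.2.1 u hu.1 (hu.2.2.2.b_pos hC)]
  exact mem_resolve.2 (Or.inl rfl)

theorem PosLovingPair.mem_foldl_bestMateInit (hpq : I.PosLovingPair p q) (hC : I.IsConfig C)
    {l : List P} (hp : p ∈ l) : s(p, q) ∈ l.foldl I.bestMateInit C := by
  obtain ⟨l₁, l₂, rfl⟩ := List.append_of_mem hp
  rw [List.foldl_append, List.foldl_cons]
  have hC₁ := hC.foldl_bestMateInit l₁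
  have he := hpq.mem_bestMateInit_left hC₁
  exact (hpq.foldl_bestMateInit_reduce (hC₁.bestMateInit p) he l₂).1.2

theorem Acyclic.isStable_foldl_rounds (hI : I.Acyclic) (hC : I.IsConfig C)
    (rounds : List (List P)) (hlen : ((∑ x, I.b x) + 1) / 2 ≤ rounds.length)
    (hround : ∀ l ∈ rounds, ∀ x, x ∈ l) :
    I.IsStable (rounds.foldl (fun D l => l.foldl I.bestMateInit D) C) := by
  induction hB : ∑ x, I.b x using Nat.strong_induction_on generalizing I C rounds with
  | _ B ih =>
  by_cases h : ∃ x y, I.G.Adj x y ∧ 0 < I.b x ∧ 0 < I.b y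
  · obtain ⟨x, y, hxy, hx, hy⟩ := h
    obtain ⟨p, q, hpq⟩ := hI.exists_posLovingPair hxy hx hy
    have hsum := sum_b_reduce hpq.1.ne hpq.2.1 hpq.2.2.1
    obtain ⟨l, rounds, rfl⟩ := List.exists_cons_of_length_pos (l := rounds) (by omega)
    have hC₁ := hC.foldl_bestMateInit l
    have he := hpq.mem_foldl_bestMateInit hC (hround l List.mem_cons_self p)
    obtain ⟨⟨hC', he'⟩, heq⟩ := hpq.foldl_rounds_reduce hC₁ he rounds
    rw [List.foldl_cons, hpq.isStable_iff_reduce hC' he', ← heq]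
    refine ih _ (by omega) (hI.reduce p q) (hpq.isConfig_reduce hC₁ he) rounds ?_
      (fun l hl => hround l (List.mem_cons_of_mem _ hl)) rfl
    rw [List.length_cons] at hlen
    omega
  · have hS := hC.isStable_of_not_exists h
    rwa [List.foldl_fixed' hS.foldl_bestMateInit]

theorem Acyclic.eq_of_isStable (hI : I.Acyclic) {D D' : Finset (Sym2 P)} (hD : I.IsStable D)
    (hD' : I.IsStable D') : D = D' := by
  induction hB : ∑ x, I.b x using Nat.strong_induction_on generalizing I D D' with
  | _ B ih =>
  by_cases h : ∃ x y, I.G.Adj x y ∧ 0 < I.b x ∧ 0 < I.b y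
  · obtain ⟨x, y, hxy, hx, hy⟩ := h
    obtain ⟨p, q, hpq⟩ := hI.exists_posLovingPair hxy hx hy
    have hsum := sum_b_reduce hpq.1.ne hpq.2.1 hpq.2.2.1
    have he := hpq.mem_of_isStable hD
    have he' := hpq.mem_of_isStable hD'
    rw [← Finset.insert_erase he, ← Finset.insert_erase he',
      ih _ (by omega) (hI.reduce p q) ((hpq.isStable_iff_reduce hD.1 he).1 hD)
        ((hpq.isStable_iff_reduce hD'.1 he').1 hD') rfl]
  · rw [hD.1.eq_empty_of_not_exists h, hD'.1.eq_empty_of_not_exists h]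

end PrefInstance

/-- Periodic best-mate initiatives converge in at most
`⌈B / 2⌉` rounds: in an acyclic instance, starting from any configuration, after
`⌈B / 2⌉` rounds (a round being a finite sequence of best-mate initiatives in
which each peer takes exactly one best-mate initiative, in arbitrary order), the
resulting configuration is the unique stable configuration of the instance,
where `B` is the sum of all quotas. -/
theorem acyclic_periodic_bestMate_converges (I : PrefInstance P) (hI : I.Acyclic)
    (C : Finset (Sym2 P)) (hC : I.IsConfig C)
    (rounds : List (List P))
    (hlen : rounds.length = ((∑ p : P, I.b p) + 1) / 2)
    (hround : ∀ l ∈ rounds, ∀ p : P, l.count p = 1) :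
    I.IsStable (rounds.foldl (fun D l => l.foldl I.bestMateInit D) C) ∧
      ∀ D : Finset (Sym2 P), I.IsStable D →
        D = rounds.foldl (fun D l => l.foldl I.bestMateInit D) C := by
  have hstable := hI.isStable_foldl_rounds hC rounds hlen.ge fun l hl p =>
    List.count_pos_iff.1 (by rw [hround l hl p]; exact one_pos)
  exact ⟨hstable, fun D hD => hI.eq_of_isStable hD hstable⟩
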